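/- Let k be a field, let A = k[x,y]_{(x,y)} with maximal ideal m, and let I = (x², y²). Then the integral closure of I^n equals m^{2n} for every n ≥ 1, and λ(Ī^n/I^n) = n for every n ≥ 1. -/

import Mathlib

/-!
In `k[x,y]` both `𝔪ʲ = (x,y)ʲ` and `(x²,y²)ⁿ` are monomial ideals: `f ∈ 𝔪ʲ` iff every monomial
of `f` has degree `≥ j`, and `f ∈ (x²,y²)ⁿ` iff every monomial `xᵃyᵇ` of `f` has
`⌊a/2⌋ + ⌊b/2⌋ ≥ n`. Both contain a power of the maximal ideal `𝔪`, so they are contracted from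
the localization `A`.

Each monomial `z` of degree `2n` has `z² ∈ I²ⁿ`, so `𝔪²ⁿ ⊆ Īⁿ`. Conversely the `𝔪`-adic order
is multiplicative on `k[x,y]` (it is the order of formal power series), hence on `A`; if `z` has
order `e < 2n`, an equation of integral dependence over `Iⁿ ⊆ 𝔪²ⁿ` would put `zʳ` in `𝔪^(re+1)`.

Finally `𝔪 · 𝔪²ⁿ ⊆ Iⁿ`, so `A` acts on `𝔪²ⁿ/Iⁿ` through `A/𝔪 = k`; the `A`-length is the
`k`-dimension, and the monomials `x^(2i+1) y^(2n-2i-1)`, `i < n`, form a `k`-basis.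
-/

open IsLocalRing Filter Polynomial

noncomputable section
set_option synthInstance.maxHeartbeats 1000000
set_option maxHeartbeats 2000000
set_option linter.unusedVariables false

/-- The length `λ(M)` of a module: the supremum of the lengths of chains of submodules
(an element of `WithBot ℕ∞`), truncated to a natural number. -/
noncomputable def lamNat (R M : Type*) [Ring R] [AddCommGroup M] [Module R M] : ℕ :=
  ENat.toNat (WithBot.unbotD 0 (Order.krullDim (Submodule R M)))

/-- The set of elements integral over an ideal `J`: `x` satisfying a monic equation
`x^r + a₁ x^(r-1) + ⋯ + a_r = 0` with `aᵢ ∈ Jⁱ`. -/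
def Ideal.intClSet {A : Type} [CommRing A] (J : Ideal A) : Set A :=
  {x | ∃ r : ℕ, 0 < r ∧ ∃ a : ℕ → A, (∀ i, 1 ≤ i → i ≤ r → a i ∈ J ^ i) ∧
    x ^ r + ∑ i ∈ Finset.Icc 1 r, a i * x ^ (r - i) = 0}

/-- The integral closure `J̄` of an ideal `J`. -/
def Ideal.intCl {A : Type} [CommRing A] (J : Ideal A) : Ideal A := Ideal.span J.intClSet

/-- The maximal ideal `(x,y)` of `k[x,y]`. -/
abbrev mxy (k : Type) [Field k] : Ideal (MvPolynomial (Fin 2) k) :=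
  Ideal.span {MvPolynomial.X 0, MvPolynomial.X 1}

/-- The local ring `A = k[x,y]_(x,y)`. -/
abbrev locA (k : Type) [Field k] [(mxy k).IsPrime] : Type :=
  Localization.AtPrime (mxy k)

/-- The ideal `I = (x², y²)` of `A`. -/
noncomputable abbrev idealI (k : Type) [Field k] [(mxy k).IsPrime] : Ideal (locA k) :=
  Ideal.span {algebraMap (MvPolynomial (Fin 2) k) (locA k) (MvPolynomial.X 0 ^ 2),
    algebraMap (MvPolynomial (Fin 2) k) (locA k) (MvPolynomial.X 1 ^ 2)}

open MvPolynomial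

namespace Ideal

section CommSemiring

variable {R : Type*} [CommSemiring R]

-- The `𝔪`-adic order satisfies `ord (z ^ r) = r * ord z`.
def OrderMulPow (𝔪 : Ideal R) : Prop :=
  ∀ (z : R) (e r : ℕ), z ∈ 𝔪 ^ e → z ∉ 𝔪 ^ (e + 1) → z ^ r ∉ 𝔪 ^ (r * e + 1)

theorem mem_of_mul_mem_of_pow_le {P J : Ideal R} [P.IsMaximal] {N : ℕ} (hJ : P ^ N ≤ J)
    {a b : R} (ha : a ∉ P) (hab : a * b ∈ J) : b ∈ J := by
  obtain ⟨c, i, hi, hci⟩ := IsMaximal.exists_inv_pow P ha N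
  rw [← one_mul b, ← hci, add_mul, mul_assoc]
  exact add_mem (J.mul_mem_left c hab) (J.mul_mem_right b (hJ hi))

end CommSemiring

variable {A : Type} [CommRing A]

theorem mem_intClSet_of_pow_mem_pow {J : Ideal A} {z : A} {r : ℕ} (hr : 0 < r)
    (hz : z ^ r ∈ J ^ r) : z ∈ J.intClSet := by
  refine ⟨r, hr, fun i => if i = r then -z ^ r else 0, fun i _ hir => ?_, ?_⟩
  · dsimp only
    split_ifs with h
    · exact neg_mem (h ▸ hz)
    · exact zero_mem _
  · dsimp only
    rw [Finset.sum_eq_single_of_mem r (Finset.mem_Icc.2 ⟨hr, le_rfl⟩)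
      (fun i _ hi => by rw [if_neg hi, zero_mul])]
    simp

theorem intClSet_subset_pow {𝔪 J : Ideal A} {c : ℕ} (h𝔪 : 𝔪.OrderMulPow) (hJ : J ≤ 𝔪 ^ c) :
    J.intClSet ⊆ (𝔪 ^ c : Ideal A) := by
  rintro z ⟨r, -, a, ha, hz⟩
  suffices ∀ e ≤ c, z ∈ 𝔪 ^ e from this c le_rfl
  intro e he
  induction e with
  | zero => simp
  | succ e ih =>
    have hze : z ∈ 𝔪 ^ e := ih (by omega)
    by_contra hze'
    refine h𝔪 z e r hze hze' ?_
    rw [eq_neg_of_add_eq_zero_left hz]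
    refine neg_mem (Ideal.sum_mem _ fun i hi => ?_)
    obtain ⟨hi1, hir⟩ := Finset.mem_Icc.1 hi
    have hai : a i ∈ 𝔪 ^ (c * i) := pow_mul 𝔪 c i ▸ pow_right_mono hJ i (ha i hi1 hir)
    have hzi : z ^ (r - i) ∈ 𝔪 ^ (e * (r - i)) := pow_mul 𝔪 e (r - i) ▸ pow_mem_pow hze _
    refine pow_le_pow_right ?_ (pow_add 𝔪 _ _ ▸ mul_mem_mul hai hzi)
    obtain ⟨m, rfl⟩ := Nat.exists_eq_add_of_le hir
    rw [Nat.add_sub_cancel_left]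
    nlinarith

end Ideal

theorem Module.length_eq_of_forall_exists_smul_eq (k A M : Type*) [CommRing k] [Ring A]
    [Algebra k A] [AddCommGroup M] [Module A M] [Module k M] [IsScalarTower k A M]
    (h : ∀ a : A, ∃ c : k, ∀ v : M, a • v = c • v) : Module.length A M = Module.length k M := by
  let e : Submodule A M ≃o Submodule k M :=
    OrderIso.ofSurjective (Submodule.restrictScalarsEmbedding k A M) fun p =>
      ⟨{ p with
        smul_mem' := fun a v hv => by
          obtain ⟨c, hc⟩ := h a
          rw [hc]
          exact p.smul_mem c hv }, rfl⟩
  exact WithBot.coe_injective (by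
    rw [Module.coe_length, Module.coe_length, Order.krullDim_eq_of_orderIso e])

theorem lamNat_eq_toNat_length (R M : Type*) [Ring R] [AddCommGroup M] [Module R M] :
    lamNat R M = (Module.length R M).toNat := by
  rw [lamNat, ← Module.coe_length, WithBot.unbotD_coe]

namespace IsLocalization.AtPrime

variable {R S : Type*} [CommRing R] [CommRing S] [Algebra R S] (P : Ideal R) [P.IsMaximal]
  [IsLocalization.AtPrime S P]

theorem mk'_mem_map_iff_of_pow_le {J : Ideal R} {N : ℕ} (hJ : P ^ N ≤ J) (f : R)
    (s : P.primeCompl) : mk' S f s ∈ J.map (algebraMap R S) ↔ f ∈ J := by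
  rw [IsLocalization.mk'_mem_map_algebraMap_iff]
  exact ⟨fun ⟨t, ht, htf⟩ => Ideal.mem_of_mul_mem_of_pow_le hJ ht htf,
    fun hf => ⟨1, P.primeCompl.one_mem, by rwa [one_mul]⟩⟩

theorem algebraMap_mem_map_iff_of_pow_le {J : Ideal R} {N : ℕ} (hJ : P ^ N ≤ J) (f : R) :
    algebraMap R S f ∈ J.map (algebraMap R S) ↔ f ∈ J := by
  rw [← IsLocalization.mk'_one (M := P.primeCompl) S f]
  exact mk'_mem_map_iff_of_pow_le P hJ f 1

variable [IsLocalRing S]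

theorem maximalIdeal_pow_eq_map (e : ℕ) : maximalIdeal S ^ e = (P ^ e).map (algebraMap R S) := by
  rw [Ideal.map_pow, map_eq_maximalIdeal P S]

theorem orderMulPow_maximalIdeal (hP : P.OrderMulPow) : (maximalIdeal S).OrderMulPow := by
  intro z e r
  obtain ⟨⟨f, s⟩, rfl⟩ := IsLocalization.mk'_surjective P.primeCompl z
  simp only [← IsLocalization.mk'_pow, maximalIdeal_pow_eq_map P,
    mk'_mem_map_iff_of_pow_le P le_rfl]
  exact hP f e r

theorem exists_sub_algebraMap_mem_maximalIdeal {k : Type*} [CommRing k] [Algebra k R]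
    [Algebra k S] [IsScalarTower k R S] (hP : ∀ f : R, ∃ c : k, f - algebraMap k R c ∈ P)
    (a : S) : ∃ c : k, a - algebraMap k S c ∈ maximalIdeal S := by
  obtain ⟨g, hg⟩ := Ideal.Quotient.mk_surjective ((equivQuotMaximalIdeal P S).symm
    (Ideal.Quotient.mk _ a))
  have hag : a - algebraMap R S g ∈ maximalIdeal S := by
    rw [← Ideal.Quotient.eq, ← equivQuotMaximalIdeal_apply_mk P S, hg,
      RingEquiv.apply_symm_apply]
  obtain ⟨c, hc⟩ := hP g
  refine ⟨c, ?_⟩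
  have hgc : algebraMap R S (g - algebraMap k R c) ∈ maximalIdeal S := by
    rw [← map_eq_maximalIdeal P S]
    exact Ideal.mem_map_of_mem _ hc
  rw [map_sub, ← IsScalarTower.algebraMap_apply] at hgc
  simpa using add_mem hag hgc

end IsLocalization.AtPrime

theorem MvPowerSeries.order_pow {σ R : Type*} [CommSemiring R] [NoZeroDivisors R] [Nontrivial R]
    (f : MvPowerSeries σ R) (r : ℕ) : (f ^ r).order = r * f.order := by
  induction r with
  | zero => rw [pow_zero, Nat.cast_zero, zero_mul]; exact weightedOrder_one _
  | succ r ih => rw [pow_succ, order_mul, ih, Nat.cast_succ, add_one_mul]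

theorem Finsupp.degree_fin_two (d : Fin 2 →₀ ℕ) : d.degree = d 0 + d 1 := by
  rw [Finsupp.degree_eq_sum, Fin.sum_univ_two]

namespace MvPolynomial

section idealOfVars

variable {σ R : Type*} [CommSemiring R]

theorem mem_idealOfVars_iff (f : MvPolynomial σ R) :
    f ∈ idealOfVars σ R ↔ coeff 0 f = 0 := by
  rw [← pow_one (idealOfVars σ R), mem_pow_idealOfVars_iff']
  refine ⟨fun h => h 0 (by simp), fun h x hx => ?_⟩
  rw [Nat.lt_one_iff, Finsupp.degree_eq_zero_iff] at hx
  rw [hx, h]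

theorem sub_C_coeff_zero_mem_idealOfVars {R : Type*} [CommRing R] (f : MvPolynomial σ R) :
    f - MvPolynomial.C (coeff 0 f) ∈ idealOfVars σ R := by
  rw [mem_idealOfVars_iff, coeff_sub, coeff_zero_C, sub_self]

instance {K : Type*} [Field K] : (idealOfVars σ K).IsMaximal := by
  have : idealOfVars σ K = RingHom.ker (constantCoeff (σ := σ) (R := K)) := by
    ext f
    rw [mem_idealOfVars_iff, RingHom.mem_ker, MvPolynomial.constantCoeff_eq]
  rw [this]
  exact RingHom.ker_isMaximal_of_surjective _ fun c =>
    ⟨MvPolynomial.C c, MvPolynomial.constantCoeff_C σ c⟩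

theorem mem_pow_idealOfVars_iff_le_order (n : ℕ) (f : MvPolynomial σ R) :
    f ∈ idealOfVars σ R ^ n ↔ (n : ℕ∞) ≤ (f : MvPowerSeries σ R).order := by
  rw [mem_pow_idealOfVars_iff']
  refine ⟨fun h => MvPowerSeries.nat_le_order fun d hd => ?_, fun h d hd => ?_⟩
  · rw [MvPolynomial.coeff_coe]
    exact h d hd
  · rw [← MvPolynomial.coeff_coe]
    exact MvPowerSeries.coeff_of_lt_order (lt_of_lt_of_le (by exact_mod_cast hd) h)

theorem orderMulPow_idealOfVars [NoZeroDivisors R] [Nontrivial R] :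
    (idealOfVars σ R).OrderMulPow := by
  intro f e r he he1
  rw [mem_pow_idealOfVars_iff_le_order] at he he1 ⊢
  have hord : (f : MvPowerSeries σ R).order = e :=
    le_antisymm (not_lt.1 fun h => he1 (Order.add_one_le_of_lt h)) he
  rw [coe_pow, MvPowerSeries.order_pow, hord, not_le]
  exact_mod_cast Nat.lt_succ_self (r * e)

end idealOfVars

section SquaresOfVariables

variable {R : Type*} [CommSemiring R]

theorem monomial_mem_span_X_sq_pow (d : Fin 2 →₀ ℕ) (c : R) :
    monomial d c ∈ Ideal.span {X 0 ^ 2, X 1 ^ 2} ^ (d 0 / 2 + d 1 / 2) := by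
  have hd : monomial d c = MvPolynomial.C c * X 0 ^ (d 0 % 2) * X 1 ^ (d 1 % 2) *
      ((X 0 ^ 2) ^ (d 0 / 2) * (X 1 ^ 2) ^ (d 1 / 2)) := by
    rw [monomial_eq, Finsupp.prod_fintype _ _ fun _ => pow_zero _, Fin.prod_univ_two]
    conv_lhs => rw [← Nat.mod_add_div (d 0) 2, ← Nat.mod_add_div (d 1) 2]
    ring
  rw [hd, pow_add]
  exact Ideal.mul_mem_left _ _ (Ideal.mul_mem_mul
    (Ideal.pow_mem_pow (Ideal.subset_span (by simp)) _)
    (Ideal.pow_mem_pow (Ideal.subset_span (by simp)) _))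

theorem le_of_mem_span_X_sq_pow {n : ℕ} {f : MvPolynomial (Fin 2) R}
    (hf : f ∈ Ideal.span {X 0 ^ 2, X 1 ^ 2} ^ n) {d : Fin 2 →₀ ℕ} (hd : d ∈ f.support) :
    n ≤ d 0 / 2 + d 1 / 2 := by
  induction n generalizing f d with
  | zero => exact Nat.zero_le _
  | succ n ih =>
    rw [pow_succ] at hf
    refine Submodule.mul_induction_on (C := fun f => ∀ d ∈ f.support, n + 1 ≤ d 0 / 2 + d 1 / 2)
      hf (fun a ha b hb d hd => ?_) (fun a b ha hb d hd => ?_) d hd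
    · obtain ⟨u, hu, v, hv, rfl⟩ := Finset.mem_add.1 (support_mul a b hd)
      have hspan : (Ideal.span {X 0 ^ 2, X 1 ^ 2} : Ideal (MvPolynomial (Fin 2) R)) =
          Ideal.span ((fun s => MvPolynomial.monomial s (1 : R)) ''
            {Finsupp.single 0 2, Finsupp.single 1 2}) := by
        simp [Set.image_pair, MvPolynomial.X_pow_eq_monomial]
      rw [hspan, mem_ideal_span_monomial_image] at hb
      obtain ⟨s, hs, hsv⟩ := hb v hv
      have hv0 := hsv 0
      have hv1 := hsv 1
      have hv2 : 1 ≤ v 0 / 2 + v 1 / 2 := by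
        rcases hs with rfl | rfl <;> simp at hv0 hv1 <;> omega
      have hu2 := ih ha hu
      rw [Finsupp.add_apply, Finsupp.add_apply]
      omega
    · rcases Finset.mem_union.1 (support_add hd) with h | h
      exacts [ha d h, hb d h]

theorem mem_span_X_sq_pow_iff {n : ℕ} {f : MvPolynomial (Fin 2) R} :
    f ∈ Ideal.span {X 0 ^ 2, X 1 ^ 2} ^ n ↔ ∀ d ∈ f.support, n ≤ d 0 / 2 + d 1 / 2 := by
  refine ⟨fun hf d hd => le_of_mem_span_X_sq_pow hf hd, fun h => ?_⟩
  rw [f.as_sum]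
  exact Ideal.sum_mem _ fun d hd =>
    Ideal.pow_le_pow_right (h d hd) (monomial_mem_span_X_sq_pow d _)

theorem span_X_sq_pow_le_pow_idealOfVars (n : ℕ) :
    Ideal.span {X 0 ^ 2, X 1 ^ 2} ^ n ≤ idealOfVars (Fin 2) R ^ (2 * n) := by
  intro f hf
  rw [mem_pow_idealOfVars_iff]
  intro d hd
  have := mem_span_X_sq_pow_iff.1 hf d hd
  rw [Finsupp.degree_fin_two]
  omega

theorem pow_idealOfVars_le_span_X_sq_pow (n : ℕ) :
    idealOfVars (Fin 2) R ^ (2 * n + 1) ≤ Ideal.span {X 0 ^ 2, X 1 ^ 2} ^ n := by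
  intro f hf
  rw [mem_span_X_sq_pow_iff]
  intro d hd
  have := (mem_pow_idealOfVars_iff _ f).1 hf d hd
  rw [Finsupp.degree_fin_two] at this
  omega

theorem monomial_sq_mem_span_X_sq_pow (d : Fin 2 →₀ ℕ) :
    monomial d (1 : R) ^ 2 ∈ Ideal.span {X 0 ^ 2, X 1 ^ 2} ^ d.degree := by
  rw [MvPolynomial.monomial_pow, one_pow, Finsupp.degree_fin_two]
  convert monomial_mem_span_X_sq_pow (2 • d) (1 : R) using 2
  simp only [Finsupp.smul_apply, smul_eq_mul]
  omega

-- The exponents `(2i+1, 2n-2i-1)` of the monomials of degree `2n` outside `(x², y²)ⁿ`.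
def oddExponent (n : ℕ) (i : Fin n) : Fin 2 →₀ ℕ :=
  Finsupp.single 0 (2 * (i : ℕ) + 1) + Finsupp.single 1 (2 * (n - 1 - i) + 1)

@[simp] theorem oddExponent_zero (n : ℕ) (i : Fin n) : oddExponent n i 0 = 2 * i + 1 := by
  simp [oddExponent]

@[simp] theorem oddExponent_one (n : ℕ) (i : Fin n) :
    oddExponent n i 1 = 2 * (n - 1 - i) + 1 := by
  simp [oddExponent]

theorem oddExponent_injective (n : ℕ) : Function.Injective (oddExponent n) := by
  intro i j h
  have := congrArg (· 0) h
  simp only [oddExponent_zero] at this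
  omega

theorem coeff_oddExponent_eq_zero {n : ℕ} {f : MvPolynomial (Fin 2) R}
    (hf : f ∈ Ideal.span {X 0 ^ 2, X 1 ^ 2} ^ n) (i : Fin n) : coeff (oddExponent n i) f = 0 := by
  by_contra h
  have := mem_span_X_sq_pow_iff.1 hf _ (mem_support_iff.2 h)
  simp only [oddExponent_zero, oddExponent_one] at this
  omega

theorem sub_sum_monomial_oddExponent_mem {R : Type*} [CommRing R] {n : ℕ}
    {f : MvPolynomial (Fin 2) R} (hf : f ∈ idealOfVars (Fin 2) R ^ (2 * n)) :
    f - ∑ i, monomial (oddExponent n i) (coeff (oddExponent n i) f) ∈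
      Ideal.span {X 0 ^ 2, X 1 ^ 2} ^ n := by
  rw [mem_span_X_sq_pow_iff]
  intro d hd
  rw [MvPolynomial.mem_support_iff, coeff_sub, MvPolynomial.coeff_sum] at hd
  simp only [MvPolynomial.coeff_monomial] at hd
  by_cases hodd : ∃ i, oddExponent n i = d
  · obtain ⟨i, rfl⟩ := hodd
    rw [Finset.sum_eq_single i (fun j _ hji => if_neg ((oddExponent_injective n).ne hji))
      (by simp), if_pos rfl, sub_self] at hd
    exact absurd rfl hd
  · rw [Finset.sum_eq_zero fun i _ => if_neg fun h => hodd ⟨i, h⟩, sub_zero] at hd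
    have hdeg : 2 * n ≤ d 0 + d 1 := by
      rw [← Finsupp.degree_fin_two]
      exact (mem_pow_idealOfVars_iff _ f).1 hf d (MvPolynomial.mem_support_iff.2 hd)
    by_contra hlt
    refine hodd ⟨⟨d 0 / 2, by omega⟩, Finsupp.ext fun j => ?_⟩
    fin_cases j <;> simp <;> omega

end SquaresOfVariables

end MvPolynomial

section LocalRing

variable {k : Type} [Field k]

theorem mxy_eq_idealOfVars : mxy k = idealOfVars (Fin 2) k := by
  refine congrArg Ideal.span (Set.ext fun p => ?_)
  simp [Fin.exists_fin_two, @eq_comm _ p]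

instance : (mxy k).IsMaximal := mxy_eq_idealOfVars (k := k) ▸ inferInstance

variable [(mxy k).IsPrime]

theorem maximalIdeal_locA_pow (j : ℕ) :
    maximalIdeal (locA k) ^ j = (idealOfVars (Fin 2) k ^ j).map (algebraMap _ (locA k)) := by
  rw [← mxy_eq_idealOfVars]
  exact IsLocalization.AtPrime.maximalIdeal_pow_eq_map (mxy k) j

theorem idealI_pow_eq_map (n : ℕ) :
    idealI k ^ n = (Ideal.span {X 0 ^ 2, X 1 ^ 2} ^ n : Ideal (MvPolynomial (Fin 2) k)).map
      (algebraMap _ (locA k)) := by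
  rw [Ideal.map_pow, Ideal.map_span, Set.image_pair]

theorem intCl_idealI_pow (n : ℕ) : (idealI k ^ n).intCl = maximalIdeal (locA k) ^ (2 * n) := by
  refine le_antisymm (Ideal.span_le.2 (Ideal.intClSet_subset_pow ?_ ?_)) ?_
  · refine IsLocalization.AtPrime.orderMulPow_maximalIdeal (mxy k) ?_
    rw [mxy_eq_idealOfVars]
    exact orderMulPow_idealOfVars
  · rw [idealI_pow_eq_map, maximalIdeal_locA_pow]
    exact Ideal.map_mono (span_X_sq_pow_le_pow_idealOfVars n)
  · rw [maximalIdeal_locA_pow, pow_idealOfVars_eq_span, Ideal.map_span, Ideal.intCl]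
    refine Ideal.span_mono ?_
    rintro _ ⟨_, ⟨d, hd, rfl⟩, rfl⟩
    refine Ideal.mem_intClSet_of_pow_mem_pow two_pos ?_
    rw [Set.mem_preimage, Set.mem_singleton_iff] at hd
    rw [← pow_mul, mul_comm n, ← hd, idealI_pow_eq_map, ← map_pow]
    exact Ideal.mem_map_of_mem _ (monomial_sq_mem_span_X_sq_pow d)

theorem algebraMap_mem_idealI_pow_iff (n : ℕ) (f : MvPolynomial (Fin 2) k) :
    algebraMap _ (locA k) f ∈ idealI k ^ n ↔ f ∈ Ideal.span {X 0 ^ 2, X 1 ^ 2} ^ n := by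
  rw [idealI_pow_eq_map]
  refine IsLocalization.AtPrime.algebraMap_mem_map_iff_of_pow_le (mxy k) ?_ f (N := 2 * n + 1)
  rw [mxy_eq_idealOfVars]
  exact pow_idealOfVars_le_span_X_sq_pow n

theorem maximalIdeal_pow_succ_le_idealI_pow (n : ℕ) :
    maximalIdeal (locA k) ^ (2 * n + 1) ≤ idealI k ^ n := by
  rw [maximalIdeal_locA_pow, idealI_pow_eq_map]
  exact Ideal.map_mono (pow_idealOfVars_le_span_X_sq_pow n)

theorem exists_sub_algebraMap_mem_maximalIdeal_locA (a : locA k) :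
    ∃ c : k, a - algebraMap k (locA k) c ∈ maximalIdeal (locA k) := by
  refine IsLocalization.AtPrime.exists_sub_algebraMap_mem_maximalIdeal (mxy k) (fun f => ?_) a
  refine ⟨coeff 0 f, ?_⟩
  rw [mxy_eq_idealOfVars, MvPolynomial.algebraMap_eq]
  exact sub_C_coeff_zero_mem_idealOfVars f

variable (k) in
abbrev maximalIdealPowQuot (n : ℕ) :
    Submodule (locA k) (locA k ⧸ (idealI k ^ n : Ideal (locA k))) :=
  Submodule.map (Submodule.mkQ ((idealI k ^ n : Ideal (locA k)) : Submodule (locA k) (locA k)))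
    ((maximalIdeal (locA k) ^ (2 * n) : Ideal (locA k)) : Submodule (locA k) (locA k))

theorem exists_smul_eq_smul_maximalIdealPowQuot (n : ℕ) (a : locA k) :
    ∃ c : k, ∀ v : maximalIdealPowQuot k n, a • v = c • v := by
  obtain ⟨c, hc⟩ := exists_sub_algebraMap_mem_maximalIdeal_locA a
  refine ⟨c, fun ⟨_, hv⟩ => Subtype.ext ?_⟩
  obtain ⟨x, hx, rfl⟩ := Submodule.mem_map.1 hv
  rw [← sub_eq_zero]
  change a • Submodule.mkQ _ x - c • Submodule.mkQ _ x = 0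
  rw [← LinearMap.map_smul, ← LinearMap.map_smul_of_tower, ← map_sub, smul_eq_mul,
    Algebra.smul_def, ← sub_mul, Submodule.mkQ_apply, Submodule.Quotient.mk_eq_zero]
  exact maximalIdeal_pow_succ_le_idealI_pow n (pow_succ' (maximalIdeal (locA k)) (2 * n) ▸
    Ideal.mul_mem_mul hc hx)

variable (k) in
def polynomialToQuot (n : ℕ) :
    MvPolynomial (Fin 2) k →ₗ[k] locA k ⧸ (idealI k ^ n : Ideal (locA k)) :=
  (Submodule.mkQ _).restrictScalars k ∘ₗ (IsScalarTower.toAlgHom k _ (locA k)).toLinearMap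

theorem polynomialToQuot_apply (n : ℕ) (f : MvPolynomial (Fin 2) k) :
    polynomialToQuot k n f = Submodule.Quotient.mk (algebraMap _ (locA k) f) := rfl

theorem polynomialToQuot_eq_zero_iff (n : ℕ) (f : MvPolynomial (Fin 2) k) :
    polynomialToQuot k n f = 0 ↔ f ∈ Ideal.span {X 0 ^ 2, X 1 ^ 2} ^ n := by
  rw [polynomialToQuot_apply, Submodule.Quotient.mk_eq_zero, ← algebraMap_mem_idealI_pow_iff]

theorem polynomialToQuot_mem (n : ℕ) {f : MvPolynomial (Fin 2) k}
    (hf : f ∈ idealOfVars (Fin 2) k ^ (2 * n)) : polynomialToQuot k n f ∈ maximalIdealPowQuot k n :=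
  Submodule.mem_map_of_mem (by rw [maximalIdeal_locA_pow]; exact Ideal.mem_map_of_mem _ hf)

variable (k) in
def oddMonomial (n : ℕ) (i : Fin n) : maximalIdealPowQuot k n :=
  ⟨polynomialToQuot k n (monomial (oddExponent n i) 1), polynomialToQuot_mem n <| by
    rw [monomial_mem_pow_idealOfVars_iff _ _ one_ne_zero, Finsupp.degree_fin_two]
    simp only [oddExponent_zero, oddExponent_one]
    omega⟩

theorem coe_sum_smul_oddMonomial (n : ℕ) (g : Fin n → k) :
    ((∑ i, g i • oddMonomial k n i : maximalIdealPowQuot k n) : locA k ⧸ _) =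
      polynomialToQuot k n (∑ i, monomial (oddExponent n i) (g i)) := by
  rw [Submodule.coe_sum, map_sum]
  refine Finset.sum_congr rfl fun i _ => ?_
  change g i • polynomialToQuot k n (monomial _ 1) = _
  rw [← LinearMap.map_smul, MvPolynomial.smul_monomial, smul_eq_mul, mul_one]

theorem linearIndependent_oddMonomial (n : ℕ) : LinearIndependent k (oddMonomial k n) := by
  refine Fintype.linearIndependent_iff.2 fun g hg i => ?_
  have hmem := (polynomialToQuot_eq_zero_iff n _).1
    ((coe_sum_smul_oddMonomial n g).symm.trans (congrArg Subtype.val hg))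
  have := coeff_oddExponent_eq_zero hmem i
  rwa [MvPolynomial.coeff_sum, Finset.sum_eq_single i (fun j _ hji => by
    rw [MvPolynomial.coeff_monomial, if_neg ((oddExponent_injective n).ne hji)]) (by simp),
    MvPolynomial.coeff_monomial, if_pos rfl] at this

theorem span_oddMonomial (n : ℕ) : ⊤ ≤ Submodule.span k (Set.range (oddMonomial k n)) := by
  rintro ⟨_, hv⟩ -
  obtain ⟨x, hx, rfl⟩ := Submodule.mem_map.1 hv
  obtain ⟨⟨f, s⟩, rfl⟩ := IsLocalization.mk'_surjective (mxy k).primeCompl x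
  have hf : f ∈ idealOfVars (Fin 2) k ^ (2 * n) := by
    rw [← mxy_eq_idealOfVars,
      ← IsLocalization.AtPrime.mk'_mem_map_iff_of_pow_le (mxy k) (S := locA k) le_rfl,
      ← IsLocalization.AtPrime.maximalIdeal_pow_eq_map]
    exact hx
  obtain ⟨c, hc⟩ := exists_smul_eq_smul_maximalIdealPowQuot n (IsLocalization.mk' (locA k) 1 s)
  have hfs : (⟨_, hv⟩ : maximalIdealPowQuot k n) =
      c • ∑ i, coeff (oddExponent n i) f • oddMonomial k n i := by
    have hsum : polynomialToQuot k n
        (∑ i, monomial (oddExponent n i) (coeff (oddExponent n i) f)) = polynomialToQuot k n f :=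
      (sub_eq_zero.1 (by
        rw [← map_sub, polynomialToQuot_eq_zero_iff]
        exact sub_sum_monomial_oddExponent_mem hf)).symm
    rw [← hc]
    refine Subtype.ext ?_
    rw [Submodule.coe_smul, coe_sum_smul_oddMonomial, hsum, polynomialToQuot_apply,
      ← Submodule.Quotient.mk_smul, smul_eq_mul, mul_comm, ← IsLocalization.mk'_eq_mul_mk'_one]
    rfl
  rw [hfs]
  exact Submodule.smul_mem _ c (Submodule.sum_mem _ fun i _ =>
    Submodule.smul_mem _ _ (Submodule.subset_span ⟨i, rfl⟩))

theorem lamNat_maximalIdealPowQuot (n : ℕ) : lamNat (locA k) (maximalIdealPowQuot k n) = n := by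
  let b := Module.Basis.mk (linearIndependent_oddMonomial (k := k) n) (span_oddMonomial n)
  have : Module.Finite k (maximalIdealPowQuot k n) := Module.Finite.of_basis b
  rw [lamNat_eq_toNat_length, Module.length_eq_of_forall_exists_smul_eq k _ _
    (exists_smul_eq_smul_maximalIdealPowQuot n), Module.length_eq_finrank,
    Module.finrank_eq_card_basis b, Fintype.card_fin, ENat.toNat_natCast]

end LocalRing

/-- In `A = k[x,y]_(x,y)` with `I = (x²,y²)`: the integral closure of `Iⁿ` is `m^(2n)`,
and `λ(Īⁿ/Iⁿ) = n`, for all `n ≥ 1`. -/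
theorem stmt19 (k : Type) [Field k] [(mxy k).IsPrime] :
    ∀ n : ℕ, 1 ≤ n →
      ((idealI k ^ n).intCl = (maximalIdeal (locA k)) ^ (2 * n)) ∧
      (lamNat (locA k)
        (Submodule.map (Submodule.mkQ ((idealI k ^ n : Ideal (locA k)) : Submodule (locA k) (locA k)))
          ((idealI k ^ n).intCl : Submodule (locA k) (locA k))) = n) := by
  intro n _
  rw [intCl_idealI_pow]
  exact ⟨rfl, lamNat_maximalIdealPowQuot n⟩

end
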